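/- arXiv:2605.20359 — 2 statements merged into one kernel-verified Lean document; each statement's English description precedes it below -/
import Mathlib

section
/- Let N0, T0 be positive integers, Q a real symmetric positive definite N0×N0 matrix, b ∈ ℝ^{N0}, c ∈ ℝ, and let F(ω) = T0·ωᵀQω + bᵀω + c (so F is a convex quadratic with Hessian 2T0·Q). Let H : ℝ^{N0} → ℝ be convex and differentiable, and let Δ ⊆ ℝ^{N0} be a nonempty closed convex set. Suppose ω̂ minimizes F over Δ and ω* minimizes H over Δ. Then √((ω* − ω̂)ᵀ Q (ω* − ω̂)) ≤ (1/(2T0)) · √(gᵀ Q^{−1} g), where g = ∇F(ω*) − ∇H(ω*). -/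
open Matrix

/-- Dot product with a fixed vector, as a continuous linear map. -/
noncomputable def dotCLM {n : ℕ} (v : Fin n → ℝ) : (Fin n → ℝ) →L[ℝ] ℝ :=
  LinearMap.toContinuousLinearMap
    { toFun := fun x => v ⬝ᵥ x
      map_add' := fun x y => by simp [dotProduct_add]
      map_smul' := fun r x => by simp [dotProduct_smul] }

@[simp] lemma dotCLM_apply {n : ℕ} (v x : Fin n → ℝ) : dotCLM v x = v ⬝ᵥ x := rfl

/-- The bilinear form of a matrix as a continuous linear map. -/
noncomputable def QbilCLM {n : ℕ} (Q : Matrix (Fin n) (Fin n) ℝ) :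
    (Fin n → ℝ) →L[ℝ] (Fin n → ℝ) →L[ℝ] ℝ :=
  LinearMap.toContinuousLinearMap
    { toFun := fun x => dotCLM (x ᵥ* Q)
      map_add' := fun x y => by ext z; simp [add_vecMul, add_dotProduct]
      map_smul' := fun r x => by ext z; simp [Matrix.smul_vecMul, smul_dotProduct] }

lemma dot_sym {n : ℕ} (Q : Matrix (Fin n) (Fin n) ℝ) (hsymm : Qᵀ = Q) (x y : Fin n → ℝ) :
    x ⬝ᵥ Q *ᵥ y = (Q *ᵥ x) ⬝ᵥ y := by
  rw [dotProduct_mulVec, ← hsymm, vecMul_transpose, hsymm]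

@[simp] lemma QbilCLM_apply {n : ℕ} (Q : Matrix (Fin n) (Fin n) ℝ) (x y : Fin n → ℝ) :
    QbilCLM Q x y = x ⬝ᵥ Q *ᵥ y := (dotProduct_mulVec x Q y).symm

lemma quad_hasFDerivAt {n : ℕ} (Q : Matrix (Fin n) (Fin n) ℝ) (hsymm : Qᵀ = Q) (x : Fin n → ℝ) :
    HasFDerivAt (fun ω : Fin n → ℝ => ω ⬝ᵥ Q *ᵥ ω) (dotCLM ((2 : ℝ) • (Q *ᵥ x))) x := by
  have hb := (QbilCLM Q).isBoundedBilinearMap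
  have h1 : HasFDerivAt
      ((fun p : (Fin n → ℝ) × (Fin n → ℝ) => QbilCLM Q p.1 p.2) ∘ (fun ω => (ω, ω)))
      ((hb.deriv (x, x)).comp
        ((ContinuousLinearMap.id ℝ (Fin n → ℝ)).prod (ContinuousLinearMap.id ℝ (Fin n → ℝ)))) x :=
    HasFDerivAt.comp x (hb.hasFDerivAt (x, x)) (HasFDerivAt.prodMk (hasFDerivAt_id x) (hasFDerivAt_id x))
  have hfun : (fun ω : Fin n → ℝ => ω ⬝ᵥ Q *ᵥ ω)
      = (fun p : (Fin n → ℝ) × (Fin n → ℝ) => QbilCLM Q p.1 p.2) ∘ (fun ω => (ω, ω)) := by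
    funext ω; simp
  have hder : (hb.deriv (x, x)).comp
      ((ContinuousLinearMap.id ℝ (Fin n → ℝ)).prod (ContinuousLinearMap.id ℝ (Fin n → ℝ)))
      = dotCLM ((2 : ℝ) • (Q *ᵥ x)) := by
    ext v
    simp [hb.deriv_apply, smul_dotProduct]
    have h2 : x ⬝ᵥ Q *ᵥ v = (Q *ᵥ x) ⬝ᵥ v := dot_sym Q hsymm x v
    have h3 : v ⬝ᵥ Q *ᵥ x = (Q *ᵥ x) ⬝ᵥ v := dotProduct_comm _ _
    rw [h2, h3]; ring
  rw [hfun]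
  rw [← hder]
  exact h1

/-- Cauchy–Schwarz for a positive semidefinite symmetric bilinear form. -/
lemma cs_posdef {n : ℕ} (Q : Matrix (Fin n) (Fin n) ℝ) (hsymm : Qᵀ = Q)
    (hpos : ∀ x : Fin n → ℝ, 0 ≤ x ⬝ᵥ Q *ᵥ x) (u d : Fin n → ℝ) :
    (u ⬝ᵥ Q *ᵥ d) ^ 2 ≤ (u ⬝ᵥ Q *ᵥ u) * (d ⬝ᵥ Q *ᵥ d) := by
  have hcomm : d ⬝ᵥ Q *ᵥ u = u ⬝ᵥ Q *ᵥ d := by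
    rw [dot_sym Q hsymm, dotProduct_comm]
  have key : ∀ t : ℝ, 0 ≤ (d ⬝ᵥ Q *ᵥ d) * (t * t) + (2 * (u ⬝ᵥ Q *ᵥ d)) * t + (u ⬝ᵥ Q *ᵥ u) := by
    intro t
    have h := hpos (t • d + u)
    simp only [mulVec_add, mulVec_smul, dotProduct_add, add_dotProduct,
      smul_dotProduct, dotProduct_smul, smul_eq_mul] at h
    rw [hcomm] at h
    ring_nf at h ⊢
    linarith [h]
  have hd := discrim_le_zero key
  rw [discrim] at hd
  nlinarith [hd]

theorem stmt14 (N0 T0 : ℕ) (hN0 : 0 < N0) (hT0 : 0 < T0)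
    (Q : Matrix (Fin N0) (Fin N0) ℝ) (hQ : Q.PosDef)
    (b : Fin N0 → ℝ) (c : ℝ)
    (F : (Fin N0 → ℝ) → ℝ)
    (hF : ∀ ω : Fin N0 → ℝ, F ω = (T0 : ℝ) * (ω ⬝ᵥ (Q *ᵥ ω)) + b ⬝ᵥ ω + c)
    (H : (Fin N0 → ℝ) → ℝ)
    (H' : (Fin N0 → ℝ) → ((Fin N0 → ℝ) →L[ℝ] ℝ))
    (gradH : (Fin N0 → ℝ) → (Fin N0 → ℝ))
    (hHconv : ConvexOn ℝ Set.univ H)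
    (hHdiff : ∀ ω : Fin N0 → ℝ, HasFDerivAt H (H' ω) ω)
    (hgradH : ∀ ω x : Fin N0 → ℝ, H' ω x = gradH ω ⬝ᵥ x)
    (Δ : Set (Fin N0 → ℝ)) (hΔne : Δ.Nonempty)
    (hΔclosed : IsClosed Δ) (hΔconv : Convex ℝ Δ)
    (ωhat ωstar : Fin N0 → ℝ)
    (hωhat : ωhat ∈ Δ ∧ ∀ ω ∈ Δ, F ωhat ≤ F ω)
    (hωstar : ωstar ∈ Δ ∧ ∀ ω ∈ Δ, H ωstar ≤ H ω)
    (g : Fin N0 → ℝ)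
    (hg : g = ((2 * (T0 : ℝ)) • (Q *ᵥ ωstar) + b) - gradH ωstar) :
    Real.sqrt ((ωstar - ωhat) ⬝ᵥ (Q *ᵥ (ωstar - ωhat))) ≤
      (1 / (2 * (T0 : ℝ))) * Real.sqrt (g ⬝ᵥ (Q⁻¹ *ᵥ g)) := by
  have hT : (0 : ℝ) < (T0 : ℝ) := by exact_mod_cast hT0
  have hQsymm : Qᵀ = Q := by
    have := hQ.isHermitian
    simpa [Matrix.IsHermitian, Matrix.conjTranspose_eq_transpose_of_trivial] using this
  set d : Fin N0 → ℝ := ωstar - ωhat with hd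
  -- derivative of F
  have hFder : ∀ x : Fin N0 → ℝ,
      HasFDerivAt F (dotCLM ((2 * (T0 : ℝ)) • (Q *ᵥ x) + b)) x := by
    intro x
    have h0 : HasFDerivAt (fun ω : Fin N0 → ℝ => (T0 : ℝ) * (ω ⬝ᵥ Q *ᵥ ω) + b ⬝ᵥ ω + c)
        (((T0 : ℝ) • dotCLM ((2 : ℝ) • (Q *ᵥ x))) + dotCLM b) x := by
      exact (((quad_hasFDerivAt Q hQsymm x).const_mul (T0 : ℝ)).add
        (dotCLM b).hasFDerivAt).add_const c
    have hfun : F = fun ω : Fin N0 → ℝ => (T0 : ℝ) * (ω ⬝ᵥ Q *ᵥ ω) + b ⬝ᵥ ω + c :=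
      funext hF
    have hder : ((T0 : ℝ) • dotCLM ((2 : ℝ) • (Q *ᵥ x))) + dotCLM b
        = dotCLM ((2 * (T0 : ℝ)) • (Q *ᵥ x) + b) := by
      ext v
      simp [smul_dotProduct, add_dotProduct]
      ring
    rw [hfun, ← hder]
    exact h0
  -- variational inequality for F at ωhat
  have hyF : ωstar - ωhat ∈ posTangentConeAt Δ ωhat :=
    sub_mem_posTangentConeAt_of_segment_subset (hΔconv.segment_subset hωhat.1 hωstar.1)
  have hminF : IsLocalMinOn F Δ ωhat := (isMinOn_iff.mpr hωhat.2).localize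
  have VIF : 0 ≤ ((2 * (T0 : ℝ)) • (Q *ᵥ ωhat) + b) ⬝ᵥ d := by
    have := hminF.hasFDerivWithinAt_nonneg (hFder ωhat).hasFDerivWithinAt hyF
    simpa [hd] using this
  -- variational inequality for H at ωstar
  have hyH : ωhat - ωstar ∈ posTangentConeAt Δ ωstar :=
    sub_mem_posTangentConeAt_of_segment_subset (hΔconv.segment_subset hωstar.1 hωhat.1)
  have hminH : IsLocalMinOn H Δ ωstar := (isMinOn_iff.mpr hωstar.2).localize
  have VIH : 0 ≤ gradH ωstar ⬝ᵥ (ωhat - ωstar) := by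
    have := hminH.hasFDerivWithinAt_nonneg (hHdiff ωstar).hasFDerivWithinAt hyH
    rwa [hgradH] at this
  -- key inequality : 2 T0 * dᵀ Q d ≤ g ⬝ d
  have hgd : gradH ωstar ⬝ᵥ d = - (gradH ωstar ⬝ᵥ (ωhat - ωstar)) := by
    rw [hd, ← dotProduct_neg, neg_sub]
  have key : 2 * (T0 : ℝ) * (d ⬝ᵥ Q *ᵥ d) ≤ g ⬝ᵥ d := by
    have hsplit : g ⬝ᵥ d = ((2 * (T0 : ℝ)) • (Q *ᵥ ωstar) + b) ⬝ᵥ d - gradH ωstar ⬝ᵥ d := by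
      rw [hg, sub_dotProduct]
    have hdiff : ((2 * (T0 : ℝ)) • (Q *ᵥ ωstar) + b) ⬝ᵥ d
        - ((2 * (T0 : ℝ)) • (Q *ᵥ ωhat) + b) ⬝ᵥ d
        = 2 * (T0 : ℝ) * (d ⬝ᵥ Q *ᵥ d) := by
      have h1 : (Q *ᵥ d) ⬝ᵥ d = d ⬝ᵥ Q *ᵥ d := (dot_sym Q hQsymm d d).symm
      have h4 : (Q *ᵥ ωstar) ⬝ᵥ d - (Q *ᵥ ωhat) ⬝ᵥ d = (Q *ᵥ d) ⬝ᵥ d := by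
        rw [hd, mulVec_sub, sub_dotProduct]
      simp only [add_dotProduct, smul_dotProduct, smul_eq_mul]
      rw [← h1, ← h4]
      ring
    have h2 : 0 ≤ - (gradH ωstar ⬝ᵥ d) := by rw [hgd, neg_neg]; exact VIH
    linarith [hsplit, hdiff, VIF, h2]
  -- Cauchy-Schwarz
  have hpos : ∀ x : Fin N0 → ℝ, 0 ≤ x ⬝ᵥ Q *ᵥ x := by
    intro x
    simpa using hQ.posSemidef.dotProduct_mulVec_nonneg x
  set u : Fin N0 → ℝ := Q⁻¹ *ᵥ g with hu
  have hQu : Q *ᵥ u = g := by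
    rw [hu, mulVec_mulVec, mul_nonsing_inv _ (isUnit_iff_ne_zero.mpr hQ.det_pos.ne'), one_mulVec]
  have huQd : u ⬝ᵥ Q *ᵥ d = g ⬝ᵥ d := by
    rw [dot_sym Q hQsymm, hQu]
  have huQu : u ⬝ᵥ Q *ᵥ u = g ⬝ᵥ Q⁻¹ *ᵥ g := by
    rw [dot_sym Q hQsymm, hQu, dotProduct_comm, hu]
  have CS : (g ⬝ᵥ d) ^ 2 ≤ (g ⬝ᵥ Q⁻¹ *ᵥ g) * (d ⬝ᵥ Q *ᵥ d) := by
    have := cs_posdef Q hQsymm hpos u d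
    rwa [huQd, huQu] at this
  -- conclude
  set a : ℝ := d ⬝ᵥ Q *ᵥ d with ha
  set r : ℝ := g ⬝ᵥ Q⁻¹ *ᵥ g with hr
  have ha0 : 0 ≤ a := hpos d
  have hr0 : 0 ≤ r := by
    have := hQ.inv.posSemidef.dotProduct_mulVec_nonneg g
    simpa [hr] using this
  have hfin : a ≤ r / (4 * (T0 : ℝ) ^ 2) := by
    rcases eq_or_lt_of_le ha0 with h | h
    · rw [← h]; positivity
    · rw [le_div_iff₀ (by positivity)]
      have h2 : 0 ≤ 2 * (T0 : ℝ) * a := by positivity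
      have h1 : (2 * (T0 : ℝ) * a) ^ 2 ≤ (g ⬝ᵥ d) ^ 2 := pow_le_pow_left₀ h2 key 2
      have h3 : (2 * (T0 : ℝ) * a) ^ 2 ≤ r * a := le_trans h1 CS
      nlinarith [h3, h, mul_pos h h]
  calc Real.sqrt a ≤ Real.sqrt (r / (4 * (T0 : ℝ) ^ 2)) := Real.sqrt_le_sqrt hfin
    _ = 1 / (2 * (T0 : ℝ)) * Real.sqrt r := by
        rw [Real.sqrt_div hr0, show (4:ℝ) * (T0:ℝ)^2 = (2*(T0:ℝ))^2 by ring,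
          Real.sqrt_sq (by positivity)]
        ring
end

section
/- Let T0, N0 be positive integers and ζ > 0. Let L₀, R₀ be real T0×N0 matrices, L₁, R₁ ∈ ℝ^{T0}, X = L₀ + R₀, Y = L₁ + R₁. Let W be a real symmetric positive semidefinite T0×T0 matrix and P a real symmetric T0×T0 matrix with 0 ⪯ P ⪯ I (in the application, P is an orthogonal projection). Let Δ = {ω ∈ ℝ^{N0} : ω ≥ 0 componentwise, Σ_j ω_j = 1} be the unit simplex. Define F(ω) = (Y − Xω)ᵀW(Y − Xω) + ζ²T0‖ω‖₂² and H(ω) = (L₁ − L₀ω)ᵀP(L₁ − L₀ω) + ζ²T0‖ω‖₂², and suppose ω̂ minimizes F over Δ and ω* minimizes H over Δ. Set Q = (1/T0)XᵀWX + ζ²I (symmetric positive definite), e^L = L₁ − L₀ω*, e^R = R₁ − R₀ω*, and define A₁ = (1/T0)‖L₀ᵀ(W − P)e^L‖_{Q^{−1}}, A₂ = (1/T0)‖R₀ᵀW e^L‖_{Q^{−1}}, A₃ = (1/√T0)·√((e^R)ᵀW e^R). Then √((ω* − ω̂)ᵀQ(ω* − ω̂)) ≤ A₁ + A₂ + A₃.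 -/
open Matrix

lemma dot_symm {m : ℕ} (B : Matrix (Fin m) (Fin m) ℝ) (hB : Bᵀ = B) (a b : Fin m → ℝ) :
    a ⬝ᵥ B *ᵥ b = b ⬝ᵥ B *ᵥ a := by
  rw [dotProduct_mulVec, dotProduct_comm, ← mulVec_transpose, hB]

lemma psd_nonneg {m : ℕ} {B : Matrix (Fin m) (Fin m) ℝ} (hB : B.PosSemidef) (a : Fin m → ℝ) :
    0 ≤ a ⬝ᵥ B *ᵥ a := by
  simpa using hB.dotProduct_mulVec_nonneg a

lemma dot_self_nonneg {m : ℕ} (a : Fin m → ℝ) : 0 ≤ a ⬝ᵥ a :=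
  Finset.sum_nonneg fun i _ => mul_self_nonneg _

lemma dot_transpose {T N : ℕ} (A : Matrix (Fin T) (Fin N) ℝ) (d : Fin N → ℝ) (w : Fin T → ℝ) :
    d ⬝ᵥ (Aᵀ *ᵥ w) = (A *ᵥ d) ⬝ᵥ w := by
  rw [mulVec_transpose, dotProduct_comm, ← dotProduct_mulVec, dotProduct_comm]

lemma psd_cs {m : ℕ} {B : Matrix (Fin m) (Fin m) ℝ} (hB : B.PosSemidef) (a b : Fin m → ℝ) :
    a ⬝ᵥ B *ᵥ b ≤ Real.sqrt (a ⬝ᵥ B *ᵥ a) * Real.sqrt (b ⬝ᵥ B *ᵥ b) := by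
  obtain ⟨C, rfl⟩ : ∃ C : Matrix (Fin m) (Fin m) ℝ, B = Cᴴ * C := by
    open scoped MatrixOrder in exact CStarAlgebra.nonneg_iff_eq_star_mul_self.mp hB.nonneg
  have key : ∀ u w : Fin m → ℝ, u ⬝ᵥ (Cᴴ * C) *ᵥ w = (C *ᵥ u) ⬝ᵥ (C *ᵥ w) := by
    intro u w
    rw [← mulVec_mulVec, dotProduct_mulVec, conjTranspose_eq_transpose_of_trivial,
      vecMul_transpose]
  rw [key, key, key]
  have h := Real.sum_mul_le_sqrt_mul_sqrt Finset.univ (fun i => (C *ᵥ a) i) (fun i => (C *ᵥ b) i)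
  simpa [dotProduct, pow_two] using h

lemma wcs {n : ℕ} {Q : Matrix (Fin n) (Fin n) ℝ} (hQ : Q.PosDef) (d v : Fin n → ℝ) :
    d ⬝ᵥ v ≤ Real.sqrt (d ⬝ᵥ Q *ᵥ d) * Real.sqrt (v ⬝ᵥ Q⁻¹ *ᵥ v) := by
  have hinv : Q *ᵥ (Q⁻¹ *ᵥ v) = v := by
    rw [mulVec_mulVec, Matrix.mul_nonsing_inv _ ((Matrix.isUnit_iff_isUnit_det Q).mp hQ.isUnit),
      one_mulVec]
  have h := psd_cs hQ.posSemidef d (Q⁻¹ *ᵥ v)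
  rw [hinv, dotProduct_comm (Q⁻¹ *ᵥ v) v] at h
  exact h

lemma quad_opt {T N : ℕ} (A : Matrix (Fin T) (Fin N) ℝ) (v : Fin T → ℝ)
    (B : Matrix (Fin T) (Fin T) ℝ) (hB : B.PosSemidef) (c : ℝ) (hc : 0 ≤ c)
    (S : Set (Fin N → ℝ)) (hS : Convex ℝ S)
    (f : (Fin N → ℝ) → ℝ)
    (hf : ∀ w, f w = (v - A *ᵥ w) ⬝ᵥ (B *ᵥ (v - A *ᵥ w)) + c * (w ⬝ᵥ w))
    (x y : Fin N → ℝ) (hx : x ∈ S) (hy : y ∈ S)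
    (hmin : ∀ w ∈ S, f x ≤ f w) :
    f x + ((A *ᵥ (y - x)) ⬝ᵥ (B *ᵥ (A *ᵥ (y - x))) + c * ((y - x) ⬝ᵥ (y - x))) ≤ f y := by
  have hBs : Bᵀ = B := by
    have := hB.isHermitian.eq
    rwa [conjTranspose_eq_transpose_of_trivial] at this
  set d : Fin N → ℝ := y - x with hd
  set g : ℝ := (-2) * ((v - A *ᵥ x) ⬝ᵥ B *ᵥ (A *ᵥ d)) + 2 * c * (x ⬝ᵥ d) with hg
  set q : ℝ := (A *ᵥ d) ⬝ᵥ B *ᵥ (A *ᵥ d) + c * (d ⬝ᵥ d) with hq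
  have hexp : ∀ t : ℝ, f (x + t • d) = f x + t * g + t ^ 2 * q := by
    intro t
    have s1 := dot_symm B hBs v (A *ᵥ d)
    have s2 := dot_symm B hBs (A *ᵥ x) (A *ᵥ d)
    have s3 := dotProduct_comm d x
    simp only [hf, hg, hq, mulVec_add, mulVec_smul, mulVec_sub, dotProduct_add,
      add_dotProduct, dotProduct_sub, sub_dotProduct, dotProduct_smul, smul_dotProduct,
      smul_eq_mul]
    linear_combination t * s1 - t * s2 + t * c * s3
  have hq0 : 0 ≤ q := add_nonneg (psd_nonneg hB _) (mul_nonneg hc (dot_self_nonneg _))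
  have hge : ∀ t : ℝ, 0 < t → t ≤ 1 → 0 ≤ t * g + t ^ 2 * q := by
    intro t ht0 ht1
    have hmem : x + t • d ∈ S := by
      have heq : x + t • d = (1 - t) • x + t • y := by
        rw [hd]; module
      rw [heq]
      exact hS hx hy (by linarith) ht0.le (by ring)
    have := hmin _ hmem
    rw [hexp t] at this
    linarith
  have hg0 : 0 ≤ g := by
    by_contra hneg
    push_neg at hneg
    set t : ℝ := min 1 (-g / (q + 1)) with ht
    have ht0 : 0 < t := lt_min one_pos (div_pos (neg_pos.2 hneg) (by linarith))
    have ht1 : t ≤ 1 := min_le_left _ _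
    have h := hge t ht0 ht1
    have h2 : 0 ≤ g + t * q := by
      by_contra hlt
      push_neg at hlt
      have : t * (g + t * q) < 0 := mul_neg_of_pos_of_neg ht0 hlt
      nlinarith
    have h3 : t * (q + 1) ≤ -g := by
      have := min_le_right (1 : ℝ) (-g / (q + 1))
      calc t * (q + 1) ≤ (-g / (q + 1)) * (q + 1) := by
            apply mul_le_mul_of_nonneg_right this (by linarith)
        _ = -g := by field_simp
    nlinarith
  have h1 := hexp 1
  have hxy : x + (1 : ℝ) • d = y := by rw [hd]; module
  rw [hxy] at h1
  rw [h1]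
  linarith

lemma final_arith (T r s a1 a2 a3 : ℝ) (hr2 : r * r = T) (hr : 0 < r) (hs : 0 < s)
    (hb : T * (s * s) ≤ s * (T * a1) + s * (T * a2) + r * a3 * (r * s)) :
    s ≤ a1 + a2 + a3 := by
  subst hr2
  nlinarith [mul_pos (mul_pos hr hr) hs]

theorem stmt16 (T0 N0 : ℕ) (hT0 : 0 < T0) (hN0 : 0 < N0)
    (ζ : ℝ) (hζ : 0 < ζ)
    (L₀ R₀ : Matrix (Fin T0) (Fin N0) ℝ) (L₁ R₁ : Fin T0 → ℝ)
    (X : Matrix (Fin T0) (Fin N0) ℝ) (hX : X = L₀ + R₀)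
    (Y : Fin T0 → ℝ) (hY : Y = L₁ + R₁)
    (W P : Matrix (Fin T0) (Fin T0) ℝ)
    (hW : W.PosSemidef) (hP : P.PosSemidef)
    (hPI : ((1 : Matrix (Fin T0) (Fin T0) ℝ) - P).PosSemidef)
    (Δ : Set (Fin N0 → ℝ))
    (hΔ : Δ = {ω : Fin N0 → ℝ | (∀ j, 0 ≤ ω j) ∧ ∑ j, ω j = 1})
    (F H : (Fin N0 → ℝ) → ℝ)
    (hF : ∀ ω : Fin N0 → ℝ,
      F ω = (Y - X *ᵥ ω) ⬝ᵥ (W *ᵥ (Y - X *ᵥ ω)) + ζ^2 * (T0 : ℝ) * (ω ⬝ᵥ ω))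
    (hH : ∀ ω : Fin N0 → ℝ,
      H ω = (L₁ - L₀ *ᵥ ω) ⬝ᵥ (P *ᵥ (L₁ - L₀ *ᵥ ω)) + ζ^2 * (T0 : ℝ) * (ω ⬝ᵥ ω))
    (ωhat ωstar : Fin N0 → ℝ)
    (hωhat : ωhat ∈ Δ ∧ ∀ ω ∈ Δ, F ωhat ≤ F ω)
    (hωstar : ωstar ∈ Δ ∧ ∀ ω ∈ Δ, H ωstar ≤ H ω)
    (Q : Matrix (Fin N0) (Fin N0) ℝ)
    (hQ : Q = ((1 : ℝ)/(T0 : ℝ)) • (Xᵀ * W * X) + ζ^2 • (1 : Matrix (Fin N0) (Fin N0) ℝ))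
    (eL eR : Fin T0 → ℝ)
    (heL : eL = L₁ - L₀ *ᵥ ωstar) (heR : eR = R₁ - R₀ *ᵥ ωstar)
    (A₁ A₂ A₃ : ℝ)
    (hA₁ : A₁ = (1/(T0 : ℝ)) *
      Real.sqrt ((L₀ᵀ *ᵥ ((W - P) *ᵥ eL)) ⬝ᵥ (Q⁻¹ *ᵥ (L₀ᵀ *ᵥ ((W - P) *ᵥ eL)))))
    (hA₂ : A₂ = (1/(T0 : ℝ)) *
      Real.sqrt ((R₀ᵀ *ᵥ (W *ᵥ eL)) ⬝ᵥ (Q⁻¹ *ᵥ (R₀ᵀ *ᵥ (W *ᵥ eL)))))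
    (hA₃ : A₃ = (1/Real.sqrt (T0 : ℝ)) * Real.sqrt (eR ⬝ᵥ (W *ᵥ eR))) :
    Real.sqrt ((ωstar - ωhat) ⬝ᵥ (Q *ᵥ (ωstar - ωhat))) ≤ A₁ + A₂ + A₃ := by
  have hT : (0:ℝ) < T0 := Nat.cast_pos.mpr hT0
  have hc : 0 ≤ ζ ^ 2 * (T0:ℝ) := mul_nonneg (sq_nonneg _) hT.le
  have hWs : Wᵀ = W := by
    have := hW.isHermitian.eq
    rwa [conjTranspose_eq_transpose_of_trivial] at this
  have hPs : Pᵀ = P := by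
    have := hP.isHermitian.eq
    rwa [conjTranspose_eq_transpose_of_trivial] at this
  have hconv : Convex ℝ Δ := by
    rw [hΔ]
    intro u hu w hw sa sb hsa hsb hab
    refine ⟨fun j => add_nonneg (mul_nonneg hsa (hu.1 j)) (mul_nonneg hsb (hw.1 j)), ?_⟩
    simp only [Pi.add_apply, Pi.smul_apply, smul_eq_mul, Finset.sum_add_distrib,
      ← Finset.mul_sum, hu.2, hw.2]
    linarith
  have h1 := quad_opt X Y W hW (ζ ^ 2 * (T0:ℝ)) hc Δ hconv F hF ωhat ωstar hωhat.1 hωstar.1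
    hωhat.2
  have h2 := quad_opt L₀ L₁ P hP (ζ ^ 2 * (T0:ℝ)) hc Δ hconv H hH ωstar ωhat hωstar.1 hωhat.1
    hωstar.2
  rw [show ωhat - ωstar = -(ωstar - ωhat) from (neg_sub _ _).symm] at h2
  simp only [mulVec_neg, neg_dotProduct, dotProduct_neg, neg_neg] at h2
  have hId : (F ωstar - H ωstar) - (F ωhat - H ωhat)
      = -(eL ⬝ᵥ W *ᵥ (X *ᵥ (ωstar - ωhat))) - ((X *ᵥ (ωstar - ωhat)) ⬝ᵥ W *ᵥ eL)
        - (eR ⬝ᵥ W *ᵥ (X *ᵥ (ωstar - ωhat))) - ((X *ᵥ (ωstar - ωhat)) ⬝ᵥ W *ᵥ eR)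
        - ((X *ᵥ (ωstar - ωhat)) ⬝ᵥ W *ᵥ (X *ᵥ (ωstar - ωhat)))
        + eL ⬝ᵥ P *ᵥ (L₀ *ᵥ (ωstar - ωhat)) + (L₀ *ᵥ (ωstar - ωhat)) ⬝ᵥ P *ᵥ eL
        + (L₀ *ᵥ (ωstar - ωhat)) ⬝ᵥ P *ᵥ (L₀ *ᵥ (ωstar - ωhat)) := by
    subst hX hY heL heR
    simp only [hF, hH, add_mulVec, mulVec_add, mulVec_sub, sub_mulVec, dotProduct_add,
      add_dotProduct, dotProduct_sub, sub_dotProduct]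
    ring
  have hκ : (T0:ℝ) * ((ωstar - ωhat) ⬝ᵥ Q *ᵥ (ωstar - ωhat))
      = (X *ᵥ (ωstar - ωhat)) ⬝ᵥ W *ᵥ (X *ᵥ (ωstar - ωhat))
        + ζ ^ 2 * (T0:ℝ) * ((ωstar - ωhat) ⬝ᵥ (ωstar - ωhat)) := by
    have e : (Xᵀ * W * X) *ᵥ (ωstar - ωhat) = Xᵀ *ᵥ (W *ᵥ (X *ᵥ (ωstar - ωhat))) := by
      rw [mulVec_mulVec, mulVec_mulVec]
    rw [hQ]
    simp only [add_mulVec, smul_mulVec, one_mulVec, dotProduct_add, dotProduct_smul,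
      smul_eq_mul, e, dot_transpose]
    field_simp
  have e1 : -((ωstar - ωhat) ⬝ᵥ (L₀ᵀ *ᵥ ((W - P) *ᵥ eL)))
        - ((ωstar - ωhat) ⬝ᵥ (R₀ᵀ *ᵥ (W *ᵥ eL)))
      = -(eL ⬝ᵥ W *ᵥ (X *ᵥ (ωstar - ωhat))) + eL ⬝ᵥ P *ᵥ (L₀ *ᵥ (ωstar - ωhat)) := by
    have s1 := dot_symm W hWs (L₀ *ᵥ (ωstar - ωhat)) eL
    have s2 := dot_symm W hWs (R₀ *ᵥ (ωstar - ωhat)) eL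
    have s3 := dot_symm P hPs (L₀ *ᵥ (ωstar - ωhat)) eL
    rw [dot_transpose, dot_transpose, hX]
    simp only [sub_mulVec, add_mulVec, mulVec_add, dotProduct_sub, dotProduct_add,
      sub_dotProduct, add_dotProduct]
    linear_combination -s1 - s2 + s3
  have hmain : (T0:ℝ) * ((ωstar - ωhat) ⬝ᵥ Q *ᵥ (ωstar - ωhat))
      ≤ -((ωstar - ωhat) ⬝ᵥ (L₀ᵀ *ᵥ ((W - P) *ᵥ eL)))
        - ((ωstar - ωhat) ⬝ᵥ (R₀ᵀ *ᵥ (W *ᵥ eL)))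
        - (eR ⬝ᵥ W *ᵥ (X *ᵥ (ωstar - ωhat))) := by
    have sL := dot_symm W hWs (X *ᵥ (ωstar - ωhat)) eL
    have sR := dot_symm W hWs (X *ᵥ (ωstar - ωhat)) eR
    have sP := dot_symm P hPs (L₀ *ᵥ (ωstar - ωhat)) eL
    linarith [h1, h2, hId, hκ, e1, sL, sR, sP]
  -- Positive definiteness of Q
  have hQpd : Q.PosDef := by
    rw [hQ]
    apply Matrix.PosDef.posSemidef_add
    · have hbase : (Xᵀ * W * X).PosSemidef := by
        have := hW.conjTranspose_mul_mul_same X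
        rwa [conjTranspose_eq_transpose_of_trivial] at this
      refine PosSemidef.of_dotProduct_mulVec_nonneg ?_ ?_
      · have h := hbase.isHermitian
        unfold Matrix.IsHermitian at h ⊢
        rw [conjTranspose_smul, h]
        simp
      · intro x
        have := hbase.dotProduct_mulVec_nonneg x
        rw [smul_mulVec, dotProduct_smul, smul_eq_mul]
        positivity
    · refine PosDef.of_dotProduct_mulVec_pos ?_ ?_
      · unfold Matrix.IsHermitian
        rw [conjTranspose_smul, conjTranspose_one]
        simp
      · intro x hx
        rw [smul_mulVec, one_mulVec, dotProduct_smul, smul_eq_mul, star_trivial]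
        have hxx : 0 < x ⬝ᵥ x :=
          lt_of_le_of_ne (dot_self_nonneg x) (Ne.symm (mt dotProduct_self_eq_zero.mp hx))
        exact mul_pos (pow_pos hζ 2) hxx
  have hκnn : 0 ≤ (ωstar - ωhat) ⬝ᵥ Q *ᵥ (ωstar - ωhat) := psd_nonneg hQpd.posSemidef _
  set s := Real.sqrt ((ωstar - ωhat) ⬝ᵥ Q *ᵥ (ωstar - ωhat)) with hs
  have hs2 : s ^ 2 = (ωstar - ωhat) ⬝ᵥ Q *ᵥ (ωstar - ωhat) := Real.sq_sqrt hκnn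
  have hsnn : 0 ≤ s := Real.sqrt_nonneg _
  have cs1 : -((ωstar - ωhat) ⬝ᵥ (L₀ᵀ *ᵥ ((W - P) *ᵥ eL)))
      ≤ s * Real.sqrt ((L₀ᵀ *ᵥ ((W - P) *ᵥ eL)) ⬝ᵥ (Q⁻¹ *ᵥ (L₀ᵀ *ᵥ ((W - P) *ᵥ eL)))) := by
    have h := wcs hQpd (ωstar - ωhat) (-(L₀ᵀ *ᵥ ((W - P) *ᵥ eL)))
    simp only [dotProduct_neg, neg_dotProduct, mulVec_neg, neg_neg] at h
    exact h
  have cs2 : -((ωstar - ωhat) ⬝ᵥ (R₀ᵀ *ᵥ (W *ᵥ eL)))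
      ≤ s * Real.sqrt ((R₀ᵀ *ᵥ (W *ᵥ eL)) ⬝ᵥ (Q⁻¹ *ᵥ (R₀ᵀ *ᵥ (W *ᵥ eL)))) := by
    have h := wcs hQpd (ωstar - ωhat) (-(R₀ᵀ *ᵥ (W *ᵥ eL)))
    simp only [dotProduct_neg, neg_dotProduct, mulVec_neg, neg_neg] at h
    exact h
  have cs3 : -(eR ⬝ᵥ W *ᵥ (X *ᵥ (ωstar - ωhat)))
      ≤ Real.sqrt (eR ⬝ᵥ W *ᵥ eR) * (Real.sqrt (T0:ℝ) * s) := by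
    have h := psd_cs hW eR (-(X *ᵥ (ωstar - ωhat)))
    simp only [mulVec_neg, dotProduct_neg, neg_dotProduct, neg_neg] at h
    have hz : (X *ᵥ (ωstar - ωhat)) ⬝ᵥ W *ᵥ (X *ᵥ (ωstar - ωhat))
        ≤ (T0:ℝ) * ((ωstar - ωhat) ⬝ᵥ Q *ᵥ (ωstar - ωhat)) := by
      have hdd := dot_self_nonneg (ωstar - ωhat)
      nlinarith [hκ]
    calc -(eR ⬝ᵥ W *ᵥ (X *ᵥ (ωstar - ωhat)))
        ≤ Real.sqrt (eR ⬝ᵥ W *ᵥ eR)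
          * Real.sqrt ((X *ᵥ (ωstar - ωhat)) ⬝ᵥ W *ᵥ (X *ᵥ (ωstar - ωhat))) := h
      _ ≤ Real.sqrt (eR ⬝ᵥ W *ᵥ eR) * (Real.sqrt (T0:ℝ) * s) := by
          apply mul_le_mul_of_nonneg_left _ (Real.sqrt_nonneg _)
          calc Real.sqrt ((X *ᵥ (ωstar - ωhat)) ⬝ᵥ W *ᵥ (X *ᵥ (ωstar - ωhat)))
              ≤ Real.sqrt ((T0:ℝ) * ((ωstar - ωhat) ⬝ᵥ Q *ᵥ (ωstar - ωhat))) :=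
                Real.sqrt_le_sqrt hz
            _ = Real.sqrt (T0:ℝ) * s := by rw [Real.sqrt_mul hT.le]
  have hsq1 : Real.sqrt ((L₀ᵀ *ᵥ ((W - P) *ᵥ eL)) ⬝ᵥ (Q⁻¹ *ᵥ (L₀ᵀ *ᵥ ((W - P) *ᵥ eL))))
      = (T0:ℝ) * A₁ := by
    rw [hA₁, ← mul_assoc, mul_one_div_cancel hT.ne', one_mul]
  have hsq2 : Real.sqrt ((R₀ᵀ *ᵥ (W *ᵥ eL)) ⬝ᵥ (Q⁻¹ *ᵥ (R₀ᵀ *ᵥ (W *ᵥ eL))))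
      = (T0:ℝ) * A₂ := by
    rw [hA₂, ← mul_assoc, mul_one_div_cancel hT.ne', one_mul]
  have hsqT : Real.sqrt (T0:ℝ) * Real.sqrt (T0:ℝ) = (T0:ℝ) := Real.mul_self_sqrt hT.le
  have hsqTpos : 0 < Real.sqrt (T0:ℝ) := Real.sqrt_pos.mpr hT
  have hsq3 : Real.sqrt (eR ⬝ᵥ W *ᵥ eR) = Real.sqrt (T0:ℝ) * A₃ := by
    rw [hA₃, ← mul_assoc, mul_one_div_cancel hsqTpos.ne', one_mul]
  have hA1nn : 0 ≤ A₁ := by rw [hA₁]; positivity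
  have hA2nn : 0 ≤ A₂ := by rw [hA₂]; positivity
  have hA3nn : 0 ≤ A₃ := by rw [hA₃]; positivity
  have hbound : (T0:ℝ) * ((ωstar - ωhat) ⬝ᵥ Q *ᵥ (ωstar - ωhat))
      ≤ s * ((T0:ℝ) * A₁) + s * ((T0:ℝ) * A₂) + Real.sqrt (T0:ℝ) * A₃ * (Real.sqrt (T0:ℝ) * s) := by
    rw [← hsq1, ← hsq2, ← hsq3]
    linarith [hmain, cs1, cs2, cs3]
  have hss : (ωstar - ωhat) ⬝ᵥ Q *ᵥ (ωstar - ωhat) = s * s := by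
    rw [hs]; exact (Real.mul_self_sqrt hκnn).symm
  rw [hss] at hbound
  rcases eq_or_lt_of_le hsnn with h0 | hpos
  · linarith
  · exact final_arith (T0:ℝ) (Real.sqrt (T0:ℝ)) s A₁ A₂ A₃ hsqT hsqTpos hpos hbound
end
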